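/- Let G be a finite simple graph with open vertex set O, and let F be a set of edges of G. Then F contains no nonempty relative cycle (no nonempty γ ⊆ F with ∂̊(γ) = ∅) if and only if F contains no nonempty cycle and every connected component of the subgraph formed by the edges of F contains at most one vertex of O. -/

import Mathlib

open symmDiff

/-- The boundary of a set `A` of edges: the set of vertices belonging to an odd
number of edges of `A`. -/
def edgeBoundary {V : Type*} [Fintype V] [DecidableEq V] (A : Finset (Sym2 V)) : Finset V :=
  Finset.univ.filter fun v => Odd (A.filter (fun e => v ∈ e)).card

/-- The relative boundary with respect to a set `O` of open vertices:
`∂̊(A) = ∂(A) \ O`. -/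
def relBoundary {V : Type*} [Fintype V] [DecidableEq V] (O : Finset V)
    (A : Finset (Sym2 V)) : Finset V :=
  edgeBoundary A \ O

section Aux

variable {V : Type*} [Fintype V] [DecidableEq V]

lemma card_symmDiff_aux {α : Type*} [DecidableEq α] (s t : Finset α) :
    (s ∆ t).card + 2 * (s ∩ t).card = s.card + t.card := by
  have h1 : s ∆ t ⊔ s ⊓ t = s ⊔ t := symmDiff_sup_inf s t
  have h2 : Disjoint (s ∆ t) (s ∩ t) := disjoint_symmDiff_inf s t
  have h4 := Finset.card_union_add_card_inter s t
  rw [Finset.sup_eq_union, Finset.inf_eq_inter, Finset.sup_eq_union] at h1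
  have h3 : (s ∆ t).card + (s ∩ t).card = (s ∪ t).card := by
    rw [← h1, Finset.card_union_of_disjoint h2]
  omega

lemma edgeBoundary_empty : edgeBoundary (∅ : Finset (Sym2 V)) = ∅ := by
  simp [edgeBoundary]

lemma edgeBoundary_symmDiff (A B : Finset (Sym2 V)) :
    edgeBoundary (A ∆ B) = edgeBoundary A ∆ edgeBoundary B := by
  ext v
  have hfilter : (A ∆ B).filter (fun e => v ∈ e)
      = A.filter (fun e => v ∈ e) ∆ B.filter (fun e => v ∈ e) := by
    ext e
    simp only [Finset.mem_symmDiff, Finset.mem_filter]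
    tauto
  have hcard := card_symmDiff_aux (A.filter (fun e => v ∈ e)) (B.filter (fun e => v ∈ e))
  simp only [edgeBoundary, Finset.mem_symmDiff, Finset.mem_filter, Finset.mem_univ, true_and,
    hfilter]
  simp only [Nat.odd_iff] at *
  omega

lemma edgeBoundary_single {a b : V} (hab : a ≠ b) :
    edgeBoundary ({s(a, b)} : Finset (Sym2 V)) = ({a} : Finset V) ∆ {b} := by
  ext v
  simp only [edgeBoundary, Finset.mem_filter, Finset.mem_univ, true_and,
    Finset.filter_singleton, Finset.mem_symmDiff, Finset.mem_singleton]
  by_cases h : v ∈ s(a, b)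
  · rw [Sym2.mem_iff] at h
    simp only [if_pos (Sym2.mem_iff.2 h), Finset.card_singleton]
    rcases h with rfl | rfl
    · simp [hab]
    · simp [Ne.symm hab, hab]
  · rw [Sym2.mem_iff] at h
    push_neg at h
    simp [if_neg (by rw [Sym2.mem_iff]; tauto : ¬ v ∈ s(a,b)), h.1, h.2]

lemma walk_boundary {F : Finset (Sym2 V)} {u v : V}
    (p : (SimpleGraph.fromEdgeSet (↑F : Set (Sym2 V))).Walk u v) :
    ∃ γ ⊆ F, edgeBoundary γ = ({u} : Finset V) ∆ {v} := by
  induction p with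
  | nil => exact ⟨∅, by simp, by rw [edgeBoundary_empty, symmDiff_self]; rfl⟩
  | @cons u w v h p ih =>
    obtain ⟨γ, hγF, hγ⟩ := ih
    rw [SimpleGraph.fromEdgeSet_adj] at h
    refine ⟨{s(u, w)} ∆ γ, ?_, ?_⟩
    · intro e he
      rw [Finset.mem_symmDiff] at he
      rcases he with ⟨he, -⟩ | ⟨he, -⟩
      · rw [Finset.mem_singleton] at he
        subst he
        exact h.1
      · exact hγF he
    · rw [edgeBoundary_symmDiff, hγ, edgeBoundary_single h.2, symmDiff_assoc,
        symmDiff_symmDiff_cancel_left]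

end Aux

/-- A set of edges `F` contains no nonempty relative cycle if and only if it
contains no nonempty cycle and every connected component of the subgraph formed
by the edges of `F` contains at most one open vertex. -/
theorem no_relative_cycle_iff {V : Type*} [Fintype V] [DecidableEq V]
    (G : SimpleGraph V) (O : Finset V)
    (F : Finset (Sym2 V)) (hF : ↑F ⊆ G.edgeSet) :
    (∀ γ ⊆ F, relBoundary O γ = ∅ → γ = ∅) ↔
      ((∀ γ ⊆ F, edgeBoundary γ = ∅ → γ = ∅) ∧
        ∀ u ∈ O, ∀ v ∈ O,
          (SimpleGraph.fromEdgeSet (↑F : Set (Sym2 V))).Reachable u v → u = v) := by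
  classical
  constructor
  · intro h
    constructor
    · intro γ hγF hb
      exact h γ hγF (by rw [relBoundary, hb]; simp)
    · intro u hu v hv hr
      by_contra huv
      obtain ⟨p⟩ := hr
      obtain ⟨γ, hγF, hγ⟩ := walk_boundary p
      have hsub : edgeBoundary γ ⊆ O := by
        rw [hγ]
        intro x hx
        rw [Finset.mem_symmDiff] at hx
        rcases hx with ⟨hx, -⟩ | ⟨hx, -⟩ <;> rw [Finset.mem_singleton] at hx <;> subst hx
        · exact hu
        · exact hv
      have := h γ hγF (by rw [relBoundary, Finset.sdiff_eq_empty_iff_subset]; exact hsub)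
      subst this
      rw [edgeBoundary_empty] at hγ
      have : u ∈ (∅ : Finset V) := by
        rw [hγ, Finset.mem_symmDiff]
        exact Or.inl ⟨Finset.mem_singleton_self u, by simp [huv]⟩
      simp at this
  · rintro ⟨h1, h2⟩ γ hγF hrb
    by_contra hne
    have hsub : edgeBoundary γ ⊆ O := by
      rwa [relBoundary, Finset.sdiff_eq_empty_iff_subset] at hrb
    have hbne : (edgeBoundary γ).Nonempty := by
      rw [Finset.nonempty_iff_ne_empty]
      exact fun hb => hne (h1 γ hγF hb)
    obtain ⟨u, hu⟩ := hbne
    set Gγ := SimpleGraph.fromEdgeSet (↑γ : Set (Sym2 V)) with hGγ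
    set γ' := γ.filter (fun e => ∀ x ∈ e, Gγ.Reachable u x) with hγ'def
    have hγ'γ : γ' ⊆ γ := Finset.filter_subset _ _
    -- edges of γ touched by a reachable vertex lie in γ'
    have hkey : ∀ e ∈ γ, ∀ x ∈ e, Gγ.Reachable u x → e ∈ γ' := by
      intro e he x hx hrx
      rw [hγ'def, Finset.mem_filter]
      refine ⟨he, ?_⟩
      intro y hy
      by_cases hxy : y = x
      · exact hxy ▸ hrx
      · refine hrx.trans (SimpleGraph.Adj.reachable ?_)
        rw [hGγ, SimpleGraph.fromEdgeSet_adj]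
        induction e with
        | h a b =>
          rw [Sym2.mem_iff] at hx hy
          constructor
          · rcases hx with rfl | rfl <;> rcases hy with rfl | rfl
            · exact (hxy rfl).elim
            · exact_mod_cast he
            · rw [Sym2.eq_swap]; exact_mod_cast he
            · exact (hxy rfl).elim
          · exact fun hE => hxy hE.symm
    -- degrees agree on reachable vertices, vanish elsewhere
    have hdeg_eq : ∀ x : V, Gγ.Reachable u x →
        γ'.filter (fun e => x ∈ e) = γ.filter (fun e => x ∈ e) := by
      intro x hrx
      apply Finset.Subset.antisymm (Finset.filter_subset_filter _ hγ'γ)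
      intro e he
      rw [Finset.mem_filter] at he ⊢
      exact ⟨hkey e he.1 x he.2 hrx, he.2⟩
    -- handshake within γ'
    have htwo : ∀ e ∈ γ', (Finset.univ.filter (fun v : V => v ∈ e)).card = 2 := by
      intro e he
      induction e with
      | h a b =>
        have hnd : ¬ (s(a,b) : Sym2 V).IsDiag :=
          G.not_isDiag_of_mem_edgeSet (hF (hγF (hγ'γ he)))
        rw [Sym2.isDiag_iff_proj_eq] at hnd
        have : Finset.univ.filter (fun v : V => v ∈ (s(a,b) : Sym2 V)) = {a, b} := by
          ext x
          simp [Sym2.mem_iff]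
        rw [this, Finset.card_insert_of_notMem (by simp [hnd]), Finset.card_singleton]
    have hhs : ∑ v : V, (γ'.filter (fun e => v ∈ e)).card = 2 * γ'.card := by
      have : ∑ v : V, (γ'.filter (fun e => v ∈ e)).card
          = ∑ e ∈ γ', (Finset.univ.filter (fun v : V => v ∈ e)).card := by
        simp_rw [Finset.card_filter]
        exact Finset.sum_comm
      rw [this, Finset.sum_congr rfl htwo, Finset.sum_const, smul_eq_mul, mul_comm]
    have heven : Even (Finset.univ.filter
        (fun v : V => Odd (γ'.filter (fun e => v ∈ e)).card)).card := by
      rw [← Finset.even_sum_iff_even_card_odd]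
      exact ⟨γ'.card, by omega⟩
    set S := Finset.univ.filter
        (fun v : V => Odd (γ'.filter (fun e => v ∈ e)).card) with hS
    have huS : u ∈ S := by
      rw [hS, Finset.mem_filter]
      refine ⟨Finset.mem_univ u, ?_⟩
      rw [hdeg_eq u (SimpleGraph.Reachable.refl u)]
      rw [edgeBoundary, Finset.mem_filter] at hu
      exact hu.2
    have hcard : 1 < S.card := by
      rcases heven with ⟨k, hk⟩
      have : 0 < S.card := Finset.card_pos.2 ⟨u, huS⟩
      omega
    obtain ⟨v, hvS, hvu⟩ := Finset.exists_mem_ne hcard u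
    rw [hS, Finset.mem_filter] at hvS
    have hvdeg := hvS.2
    have hvreach : Gγ.Reachable u v := by
      have hpos : 0 < (γ'.filter (fun e => v ∈ e)).card := hvdeg.pos
      obtain ⟨e, he⟩ := Finset.card_pos.1 hpos
      rw [Finset.mem_filter] at he
      have := he.1
      rw [hγ'def, Finset.mem_filter] at this
      exact this.2 v he.2
    have hvO : v ∈ O := by
      apply hsub
      rw [edgeBoundary, Finset.mem_filter]
      exact ⟨Finset.mem_univ v, by rwa [← hdeg_eq v hvreach]⟩
    have huO : u ∈ O := hsub hu
    have : u = v := h2 u huO v hvO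
      (hvreach.mono (SimpleGraph.fromEdgeSet_mono (by exact_mod_cast hγF)))
    exact hvu this.symm
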